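/- Let X and Y be sets and let f : X → Option ((Y ⊕ X) × ℕ) be guarded in the sense that whenever f x = some (Sum.inr x', k) then k > 0. Then there exists a unique function g : X → Option (Y × ℕ) satisfying, for all x ∈ X: if f x = none then g x = none; if f x = some (Sum.inl y, k) then g x = some (y, k); and if f x = some (Sum.inr x', k) then g x = Option.map (fun (y, t) => (y, t + k)) (g x'). -/

import Mathlib

/-!
Solutions of `f` are the fixed points of `g ↦ [η, g]* ∘ f`. Iterating this operator from the
everywhere-undefined function gives an increasing chain of partial solutions (`g` evaluated
with a bounded number of unfoldings), whose limit is a solution; guardedness is not needed for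
this. Uniqueness is where guardedness enters: if two solutions are compared at a point where one
of them terminates after `t` steps, every `inr`-unfolding strictly lowers the remaining step
count, so strong induction on `t` shows that the other one terminates there with the same result.
-/

namespace StepCounting

variable {X Y : Type*}

/-- `[η, g]* ∘ f`. -/
def kleisliStep (f : X → Option ((Y ⊕ X) × ℕ)) (g : X → Option (Y × ℕ)) (x : X) :
    Option (Y × ℕ) :=
  match f x with
  | none => none
  | some (Sum.inl y, k) => some (y, k)
  | some (Sum.inr x', k) => Option.map (fun p : Y × ℕ => (p.1, p.2 + k)) (g x')

variable {f : X → Option ((Y ⊕ X) × ℕ)}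

theorem solution_clauses_iff (g : X → Option (Y × ℕ)) (x : X) :
    ((f x = none → g x = none) ∧
      (∀ (y : Y) (k : ℕ), f x = some (Sum.inl y, k) → g x = some (y, k)) ∧
      (∀ (x' : X) (k : ℕ), f x = some (Sum.inr x', k) →
        g x = Option.map (fun p : Y × ℕ => (p.1, p.2 + k)) (g x'))) ↔
      g x = kleisliStep f g x := by
  rcases hfx : f x with _ | ⟨_ | _, _⟩ <;> simp [kleisliStep, hfx]

theorem kleisliStep_mono {g g' : X → Option (Y × ℕ)}
    (h : ∀ x v, g x = some v → g' x = some v) (x : X) (v : Y × ℕ)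
    (hv : kleisliStep f g x = some v) : kleisliStep f g' x = some v := by
  rcases hfx : f x with _ | ⟨_ | x', _⟩ <;> simp only [kleisliStep, hfx] at hv ⊢
  · exact hv
  · exact hv
  · obtain ⟨w, hw, rfl⟩ := Option.map_eq_some_iff.mp hv
    rw [h x' w hw, Option.map_some]

def approx (f : X → Option ((Y ⊕ X) × ℕ)) : ℕ → X → Option (Y × ℕ)
  | 0 => fun _ => none
  | n + 1 => kleisliStep f (approx f n)

theorem approx_succ_of_eq_some {n : ℕ} {x : X} {v : Y × ℕ} (h : approx f n x = some v) :
    approx f (n + 1) x = some v := by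
  induction n generalizing x v with
  | zero => simp [approx] at h
  | succ n ih => exact kleisliStep_mono (fun _ _ hw => ih hw) x v h

theorem approx_of_le {n m : ℕ} (hnm : n ≤ m) {x : X} {v : Y × ℕ}
    (h : approx f n x = some v) : approx f m x = some v := by
  induction m, hnm using Nat.le_induction with
  | base => exact h
  | succ m _ ih => exact approx_succ_of_eq_some ih

theorem approx_eq_some_unique {n m : ℕ} {x : X} {v w : Y × ℕ}
    (hv : approx f n x = some v) (hw : approx f m x = some w) : v = w :=
  Option.some_injective _ <| by
    rw [← approx_of_le (le_max_left n m) hv, ← approx_of_le (le_max_right n m) hw]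

open Classical in
noncomputable def fix (f : X → Option ((Y ⊕ X) × ℕ)) (x : X) : Option (Y × ℕ) :=
  if h : ∃ n, (approx f n x).isSome then approx f h.choose x else none

theorem fix_eq_some_iff {x : X} {v : Y × ℕ} : fix f x = some v ↔ ∃ n, approx f n x = some v := by
  constructor
  · intro hv
    unfold fix at hv
    split_ifs at hv with h
    exact ⟨_, hv⟩
  · rintro ⟨n, hn⟩
    have h : ∃ n, (approx f n x).isSome := ⟨n, by simp [hn]⟩
    obtain ⟨w, hw⟩ := Option.isSome_iff_exists.mp h.choose_spec
    rw [fix, dif_pos h, hw, approx_eq_some_unique hw hn]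

theorem kleisliStep_fix_eq_some_iff {x : X} {v : Y × ℕ} :
    kleisliStep f (fix f) x = some v ↔ ∃ n, kleisliStep f (approx f n) x = some v := by
  rcases hfx : f x with _ | ⟨_ | x', k⟩ <;> simp only [kleisliStep, hfx]
  · simp
  · simp
  · simp only [Option.map_eq_some_iff, fix_eq_some_iff]
    exact ⟨fun ⟨w, ⟨n, hn⟩, hw⟩ => ⟨n, w, hn, hw⟩, fun ⟨n, w, hn, hw⟩ => ⟨w, ⟨n, hn⟩, hw⟩⟩

theorem fix_eq_kleisliStep (x : X) : fix f x = kleisliStep f (fix f) x := by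
  refine Option.ext fun v => ?_
  rw [fix_eq_some_iff, kleisliStep_fix_eq_some_iff]
  exact ⟨fun ⟨n, hn⟩ => ⟨n, approx_succ_of_eq_some hn⟩, fun ⟨n, hn⟩ => ⟨n + 1, hn⟩⟩

def Guarded (f : X → Option ((Y ⊕ X) × ℕ)) : Prop :=
  ∀ (x x' : X) (k : ℕ), f x = some (Sum.inr x', k) → k > 0

theorem Guarded.eq_some_of_eq_some (hf : Guarded f) {g g' : X → Option (Y × ℕ)}
    (hg : ∀ x, g x = kleisliStep f g x) (hg' : ∀ x, g' x = kleisliStep f g' x) (t : ℕ) :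
    ∀ (x : X) (y : Y), g x = some (y, t) → g' x = some (y, t) := by
  induction t using Nat.strong_induction_on with
  | _ t ih =>
    intro x y hx
    rw [hg] at hx
    rw [hg']
    rcases hfx : f x with _ | ⟨_ | x', k⟩ <;> simp only [kleisliStep, hfx] at hx ⊢
    · exact hx
    · exact hx
    · obtain ⟨⟨y', t'⟩, hx', hyt⟩ := Option.map_eq_some_iff.mp hx
      obtain ⟨rfl, rfl⟩ := Prod.mk.inj hyt
      have hk : 0 < k := hf x x' k hfx
      rw [ih t' (by omega) x' y' hx', Option.map_some]

theorem Guarded.eq_of_fixed (hf : Guarded f) {g g' : X → Option (Y × ℕ)}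
    (hg : ∀ x, g x = kleisliStep f g x) (hg' : ∀ x, g' x = kleisliStep f g' x) : g = g' :=
  funext fun x => Option.ext fun ⟨y, t⟩ =>
    ⟨hf.eq_some_of_eq_some hg hg' t x y, hf.eq_some_of_eq_some hg' hg t x y⟩

end StepCounting

open StepCounting in
theorem guarded_step_counting_unique_solution (X Y : Type*)
    (f : X → Option ((Y ⊕ X) × ℕ))
    (hf : ∀ (x : X) (x' : X) (k : ℕ), f x = some (Sum.inr x', k) → k > 0) :
    ∃! g : X → Option (Y × ℕ), ∀ x : X,
      (f x = none → g x = none) ∧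
      (∀ (y : Y) (k : ℕ), f x = some (Sum.inl y, k) → g x = some (y, k)) ∧
      (∀ (x' : X) (k : ℕ), f x = some (Sum.inr x', k) →
        g x = Option.map (fun p : Y × ℕ => (p.1, p.2 + k)) (g x')) := by
  simp only [solution_clauses_iff]
  exact ⟨fix f, fix_eq_kleisliStep, fun g hg => Guarded.eq_of_fixed hf hg fix_eq_kleisliStep⟩
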